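/- arXiv:math-ph/0110025 — 2 statements merged into one kernel-verified Lean document; each statement's English description precedes it below -/
import Mathlib

section
/- Suppose α, θ ∈ ℝ satisfy −α < θT_1 < 1−α and −α < θT_n < 1−α. Then there exists a constant C ∈ ℝ (one may take C = γd(θ(T_1+T_n) + 2α)) such that L̄_α(e^{θG})(x) ≤ C e^{θG(x)} for every x ∈ X. -/
open scoped BigOperators
open MeasureTheory

noncomputable section

namespace EP

/-- `d`-dimensional vectors. -/
abbrev Vec (d : ℕ) := Fin d → ℝ

/-- The phase space `X = (ℝ^d)^n × (ℝ^d)^n × (ℝ^d × ℝ^d)`,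
coordinates `x = (p, q, (r₁, rₙ))`. -/
abbrev Phase (d n : ℕ) := (Fin n → Vec d) × (Fin n → Vec d) × (Vec d × Vec d)

/-- Euclidean dot product on `ℝ^d`. -/
def dotp {d : ℕ} (a b : Vec d) : ℝ := ∑ j, a j * b j

/-- 1-based access to an `n`-tuple of vectors (defaults to `0` out of range;
all uses below are in range). -/
def nth {d n : ℕ} (v : Fin n → Vec d) (i : ℕ) : Vec d :=
  if h : 1 ≤ i ∧ i ≤ n then v ⟨i - 1, by omega⟩ else 0

/-- The coordinate direction `j` of the `i`-th (1-based) vector in `(ℝ^d)^n`. -/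
def basisQ (d n : ℕ) (i : ℕ) (j : Fin d) : Fin n → Vec d :=
  if h : 1 ≤ i ∧ i ≤ n then Pi.single (⟨i - 1, by omega⟩ : Fin n) (Pi.single j 1) else 0

/-- Coordinate direction in `X`: component `j` of `p_i`. -/
def eP (d n : ℕ) (i : ℕ) (j : Fin d) : Phase d n := (basisQ d n i j, 0, 0, 0)
/-- Coordinate direction in `X`: component `j` of `q_i`. -/
def eQ (d n : ℕ) (i : ℕ) (j : Fin d) : Phase d n := (0, basisQ d n i j, 0, 0)
/-- Coordinate direction in `X`: component `j` of `r₁`. -/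
def eR1 (d n : ℕ) (j : Fin d) : Phase d n := (0, 0, Pi.single j 1, 0)
/-- Coordinate direction in `X`: component `j` of `rₙ`. -/
def eRn (d n : ℕ) (j : Fin d) : Phase d n := (0, 0, 0, Pi.single j 1)

/-- First-order partial derivative of `f` in direction `v` at `x`. -/
def pd {d n : ℕ} (f : Phase d n → ℝ) (v x : Phase d n) : ℝ := fderiv ℝ f x v

/-- Second-order partial derivative of `f` in direction `v` at `x`. -/
def pd2 {d n : ℕ} (f : Phase d n → ℝ) (v x : Phase d n) : ℝ :=
  fderiv ℝ (fun y => fderiv ℝ f y v) x v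

/-- The potential `V(q) = Σ_{i=1}^n U¹(q_i) + Σ_{i=1}^{n-1} U²(q_i - q_{i+1})`. -/
def Vpot (d n : ℕ) (U1 U2 : Vec d → ℝ) (q : Fin n → Vec d) : ℝ :=
  (∑ i ∈ Finset.Icc 1 n, U1 (nth q i)) +
  (∑ i ∈ Finset.Icc 1 (n - 1), U2 (nth q i - nth q (i + 1)))

/-- `L₀ f = γ(T₁ Δ_{r₁} f + Tₙ Δ_{rₙ} f - r₁·∇_{r₁} f - rₙ·∇_{rₙ} f)`. -/
def gen0 (d n : ℕ) (ga T1 Tn : ℝ) (f : Phase d n → ℝ) (x : Phase d n) : ℝ :=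
  ga * (T1 * ∑ j, pd2 f (eR1 d n j) x + Tn * ∑ j, pd2 f (eRn d n j) x
      - ∑ j, x.2.2.1 j * pd f (eR1 d n j) x
      - ∑ j, x.2.2.2 j * pd f (eRn d n j) x)

/-- The first-order part
`L₁ f = λ(p₁·∇_{r₁} f + pₙ·∇_{rₙ} f - r₁·∇_{p₁} f - rₙ·∇_{pₙ} f)
  + (Σ p_i·∇_{q_i} f - Σ ∇_{q_i}V·∇_{p_i} f)`. -/
def gen1 (d n : ℕ) (U1 U2 : Vec d → ℝ) (lam : ℝ) (f : Phase d n → ℝ) (x : Phase d n) : ℝ :=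
  lam * ((∑ j, nth x.1 1 j * pd f (eR1 d n j) x)
       + (∑ j, nth x.1 n j * pd f (eRn d n j) x)
       - (∑ j, x.2.2.1 j * pd f (eP d n 1 j) x)
       - (∑ j, x.2.2.2 j * pd f (eP d n n j) x))
  + ((∑ i ∈ Finset.Icc 1 n, ∑ j, nth x.1 i j * pd f (eQ d n i j) x)
   - (∑ i ∈ Finset.Icc 1 n, ∑ j,
       fderiv ℝ (Vpot d n U1 U2) x.2.1 (basisQ d n i j) * pd f (eP d n i j) x))

/-- The generator `L = L₀ + L₁`. -/
def gen (d n : ℕ) (U1 U2 : Vec d → ℝ) (ga lam T1 Tn : ℝ)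
    (f : Phase d n → ℝ) (x : Phase d n) : ℝ :=
  gen0 d n ga T1 Tn f x + gen1 d n U1 U2 lam f x

/-- The formal adjoint `Lᵀ`. -/
def genT (d n : ℕ) (U1 U2 : Vec d → ℝ) (ga lam T1 Tn : ℝ)
    (g : Phase d n → ℝ) (x : Phase d n) : ℝ :=
  ga * (T1 * ∑ j, pd2 g (eR1 d n j) x + Tn * ∑ j, pd2 g (eRn d n j) x
      + ∑ j, x.2.2.1 j * pd g (eR1 d n j) x
      + ∑ j, x.2.2.2 j * pd g (eRn d n j) x
      + 2 * (d : ℝ) * g x)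
  - lam * ((∑ j, nth x.1 1 j * pd g (eR1 d n j) x)
         + (∑ j, nth x.1 n j * pd g (eRn d n j) x)
         - (∑ j, x.2.2.1 j * pd g (eP d n 1 j) x)
         - (∑ j, x.2.2.2 j * pd g (eP d n n j) x))
  - ((∑ i ∈ Finset.Icc 1 n, ∑ j, nth x.1 i j * pd g (eQ d n i j) x)
   - (∑ i ∈ Finset.Icc 1 n, ∑ j,
       fderiv ℝ (Vpot d n U1 U2) x.2.1 (basisQ d n i j) * pd g (eP d n i j) x))

/-- The heat flows `Φ_i`, `0 ≤ i ≤ n`. -/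
def flow (d n : ℕ) (U2 : Vec d → ℝ) (lam : ℝ) (i : ℕ) (x : Phase d n) : ℝ :=
  if i = 0 then - lam * dotp x.2.2.1 (nth x.1 1)
  else if i = n then lam * dotp x.2.2.2 (nth x.1 n)
  else ∑ j, ((nth x.1 i j + nth x.1 (i + 1) j) / 2) *
        fderiv ℝ U2 (nth x.2.1 i - nth x.2.1 (i + 1)) (Pi.single j 1)

/-- The entropy productions `σ_i = (1/Tₙ - 1/T₁) Φ_i`. -/
def sigmaF (d n : ℕ) (U2 : Vec d → ℝ) (lam T1 Tn : ℝ) (i : ℕ) (x : Phase d n) : ℝ :=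
  (1 / Tn - 1 / T1) * flow d n U2 lam i x

/-- The local energies `H_i`, `1 ≤ i ≤ n`. -/
def locH (d n : ℕ) (U1 U2 : Vec d → ℝ) (i : ℕ) (x : Phase d n) : ℝ :=
  dotp (nth x.1 i) (nth x.1 i) / 2 + U1 (nth x.2.1 i)
  + (if 2 ≤ i then U2 (nth x.2.1 (i - 1) - nth x.2.1 i) else 0) / 2
  + (if i < n then U2 (nth x.2.1 i - nth x.2.1 (i + 1)) else 0) / 2

/-- `R_i = (1/T₁)(|r₁|²/2 + Σ_{k=1}^i H_k) + (1/Tₙ)(Σ_{k=i+1}^n H_k + |rₙ|²/2)`. -/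
def Rfun (d n : ℕ) (U1 U2 : Vec d → ℝ) (T1 Tn : ℝ) (i : ℕ) (x : Phase d n) : ℝ :=
  (1 / T1) * (dotp x.2.2.1 x.2.2.1 / 2 + ∑ k ∈ Finset.Icc 1 i, locH d n U1 U2 k x)
  + (1 / Tn) * ((∑ k ∈ Finset.Icc (i + 1) n, locH d n U1 U2 k x) + dotp x.2.2.2 x.2.2.2 / 2)

/-- The total energy `G(p,q,r) = |r₁|²/2 + |rₙ|²/2 + Σ|p_i|²/2 + V(q)`. -/
def Gfun (d n : ℕ) (U1 U2 : Vec d → ℝ) (x : Phase d n) : ℝ :=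
  dotp x.2.2.1 x.2.2.1 / 2 + dotp x.2.2.2 x.2.2.2 / 2
  + (∑ i : Fin n, dotp (x.1 i) (x.1 i) / 2) + Vpot d n U1 U2 x.2.1

/-- The chain energy `H_S(p,q) = Σ|p_i|²/2 + V(q)`. -/
def HS (d n : ℕ) (U1 U2 : Vec d → ℝ) (x : Phase d n) : ℝ :=
  (∑ i : Fin n, dotp (x.1 i) (x.1 i) / 2) + Vpot d n U1 U2 x.2.1

/-- Momentum reversal `(Jf)(p,q,r) = f(-p,q,r)`. -/
def Jop {d n : ℕ} (f : Phase d n → ℝ) : Phase d n → ℝ := fun x => f (-x.1, x.2)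

/-- `L̃_α f = L f + 2αγ (r₁·∇_{r₁} f + rₙ·∇_{rₙ} f)`. -/
def genTilde (d n : ℕ) (U1 U2 : Vec d → ℝ) (ga lam T1 Tn al : ℝ)
    (f : Phase d n → ℝ) (x : Phase d n) : ℝ :=
  gen d n U1 U2 ga lam T1 Tn f x
  + 2 * al * ga * ((∑ j, x.2.2.1 j * pd f (eR1 d n j) x)
                 + (∑ j, x.2.2.2 j * pd f (eRn d n j) x))

/-- `L̄_α f = L̃_α f - ((α-α²)γ(|r₁|²/T₁ + |rₙ|²/Tₙ) - 2dαγ) f`. -/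
def genBar (d n : ℕ) (U1 U2 : Vec d → ℝ) (ga lam T1 Tn al : ℝ)
    (f : Phase d n → ℝ) (x : Phase d n) : ℝ :=
  genTilde d n U1 U2 ga lam T1 Tn al f x
  - ((al - al ^ 2) * ga * (dotp x.2.2.1 x.2.2.1 / T1 + dotp x.2.2.2 x.2.2.2 / Tn)
     - 2 * (d : ℝ) * al * ga) * f x

/-! Helper lemmas for the proof. -/

section Helpers

variable {d n : ℕ}

lemma dotp_self_nonneg (a : Vec d) : 0 ≤ dotp a a :=
  Finset.sum_nonneg fun j _ => mul_self_nonneg _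

lemma dotp_zero_right (a : Vec d) : dotp a 0 = 0 := by simp [dotp]

lemma dotp_single (a : Vec d) (j : Fin d) : dotp a (Pi.single j 1) = a j := by
  simp [dotp, Pi.single_apply]

/-- The differential of `a ↦ |a|²/2`. -/
def sqD (a : Vec d) : Vec d →L[ℝ] ℝ :=
  ∑ j, a j • (ContinuousLinearMap.proj j : Vec d →L[ℝ] ℝ)

lemma sqD_apply (a v : Vec d) : sqD a v = dotp a v := by
  simp [sqD, dotp]

lemma hasFDerivAt_half_sq (a : Vec d) :
    HasFDerivAt (fun b : Vec d => dotp b b / 2) (sqD a) a := by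
  have h : ∀ j : Fin d, HasFDerivAt (fun b : Vec d => b j * b j / 2)
      (a j • (ContinuousLinearMap.proj j : Vec d →L[ℝ] ℝ)) a := by
    intro j
    have hp : HasFDerivAt (fun b : Vec d => b j)
        (ContinuousLinearMap.proj j : Vec d →L[ℝ] ℝ) a :=
      (ContinuousLinearMap.proj j : Vec d →L[ℝ] ℝ).hasFDerivAt
    have h2 := (hp.mul hp).const_mul ((2:ℝ)⁻¹)
    have e1 : (a j • (ContinuousLinearMap.proj j : Vec d →L[ℝ] ℝ))
        = (2⁻¹ : ℝ) • (a j • (ContinuousLinearMap.proj j : Vec d →L[ℝ] ℝ)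
          + a j • (ContinuousLinearMap.proj j : Vec d →L[ℝ] ℝ)) := by
      ext v
      simp only [ContinuousLinearMap.smul_apply, ContinuousLinearMap.add_apply,
        ContinuousLinearMap.proj_apply, smul_eq_mul]
      ring
    rw [e1]
    refine h2.congr_of_eventuallyEq (Filter.Eventually.of_forall fun b => ?_)
    show b j * b j / 2 = 2⁻¹ * (b j * b j)
    ring
  have hsum := HasFDerivAt.fun_sum (fun j (_ : j ∈ Finset.univ) => h j)
  refine hsum.congr_of_eventuallyEq (Filter.Eventually.of_forall fun b => ?_)
  simp [dotp, Finset.sum_div]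

lemma differentiable_nth (i : ℕ) :
    Differentiable ℝ (fun q : Fin n → Vec d => nth q i) := by
  unfold nth
  by_cases h : 1 ≤ i ∧ i ≤ n
  · simp only [dif_pos h]
    exact (ContinuousLinearMap.proj (⟨i - 1, by omega⟩ : Fin n) :
      (Fin n → Vec d) →L[ℝ] Vec d).differentiable
  · simp only [dif_neg h]
    exact differentiable_const 0

lemma differentiable_Vpot (U1 U2 : Vec d → ℝ)
    (hU1 : ContDiff ℝ (⊤ : ℕ∞) U1) (hU2 : ContDiff ℝ (⊤ : ℕ∞) U2) :
    Differentiable ℝ (Vpot d n U1 U2) := by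
  unfold Vpot
  apply Differentiable.add
  · exact Differentiable.fun_sum fun i _ =>
      (hU1.differentiable (by simp)).comp (differentiable_nth i)
  · exact Differentiable.fun_sum fun i _ =>
      (hU2.differentiable (by simp)).comp
        ((differentiable_nth i).sub (differentiable_nth (i + 1)))

/-- Projections of phase space as continuous linear maps. -/
def projP : Phase d n →L[ℝ] (Fin n → Vec d) := ContinuousLinearMap.fst ℝ _ _

def projQ : Phase d n →L[ℝ] (Fin n → Vec d) :=
  (ContinuousLinearMap.fst ℝ _ _).comp (ContinuousLinearMap.snd ℝ _ _)

def projR1 : Phase d n →L[ℝ] Vec d :=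
  (ContinuousLinearMap.fst ℝ _ _).comp
    ((ContinuousLinearMap.snd ℝ _ _).comp (ContinuousLinearMap.snd ℝ _ _))

def projRn : Phase d n →L[ℝ] Vec d :=
  (ContinuousLinearMap.snd ℝ _ _).comp
    ((ContinuousLinearMap.snd ℝ _ _).comp (ContinuousLinearMap.snd ℝ _ _))

/-- The differential of `Gfun`. -/
def DG (d n : ℕ) (U1 U2 : Vec d → ℝ) (x : Phase d n) : Phase d n →L[ℝ] ℝ :=
  (sqD x.2.2.1).comp projR1 + (sqD x.2.2.2).comp projRn
  + (∑ i : Fin n, (sqD (x.1 i)).comp ((ContinuousLinearMap.proj i).comp projP))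
  + (fderiv ℝ (Vpot d n U1 U2) x.2.1).comp projQ

lemma DG_apply (U1 U2 : Vec d → ℝ) (x v : Phase d n) :
    DG d n U1 U2 x v = dotp x.2.2.1 v.2.2.1 + dotp x.2.2.2 v.2.2.2
      + (∑ i : Fin n, dotp (x.1 i) (v.1 i))
      + fderiv ℝ (Vpot d n U1 U2) x.2.1 v.2.1 := by
  simp [DG, sqD_apply, projP, projQ, projR1, projRn]

lemma hasFDerivAt_G (U1 U2 : Vec d → ℝ)
    (hU1 : ContDiff ℝ (⊤ : ℕ∞) U1) (hU2 : ContDiff ℝ (⊤ : ℕ∞) U2) (x : Phase d n) :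
    HasFDerivAt (Gfun d n U1 U2) (DG d n U1 U2 x) x := by
  have h1 : HasFDerivAt (fun y : Phase d n => dotp y.2.2.1 y.2.2.1 / 2)
      ((sqD x.2.2.1).comp projR1) x :=
    by have := (hasFDerivAt_half_sq x.2.2.1).comp x (projR1.hasFDerivAt); exact this
  have h2 : HasFDerivAt (fun y : Phase d n => dotp y.2.2.2 y.2.2.2 / 2)
      ((sqD x.2.2.2).comp projRn) x :=
    by have := (hasFDerivAt_half_sq x.2.2.2).comp x (projRn.hasFDerivAt); exact this
  have h3 : HasFDerivAt (fun y : Phase d n => ∑ i : Fin n, dotp (y.1 i) (y.1 i) / 2)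
      (∑ i : Fin n, (sqD (x.1 i)).comp ((ContinuousLinearMap.proj i).comp projP)) x :=
    HasFDerivAt.fun_sum fun i _ => by
      have := (hasFDerivAt_half_sq (x.1 i)).comp x
        (((ContinuousLinearMap.proj i).comp projP).hasFDerivAt)
      exact this
  have h4 : HasFDerivAt (fun y : Phase d n => Vpot d n U1 U2 y.2.1)
      ((fderiv ℝ (Vpot d n U1 U2) x.2.1).comp projQ) x :=
    by have := ((differentiable_Vpot U1 U2 hU1 hU2 x.2.1).hasFDerivAt).comp x (projQ.hasFDerivAt); exact this
  exact ((h1.add h2).add h3).add h4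

lemma projR1_apply (v : Phase d n) : projR1 v = v.2.2.1 := rfl
lemma projRn_apply (v : Phase d n) : projRn v = v.2.2.2 := rfl
lemma eR1_proj (j : Fin d) : (eR1 d n j).2.2.1 = Pi.single j 1 := rfl
lemma eRn_proj (j : Fin d) : (eRn d n j).2.2.2 = Pi.single j 1 := rfl

lemma DG_eR1 (U1 U2 : Vec d → ℝ) (x : Phase d n) (j : Fin d) :
    DG d n U1 U2 x (eR1 d n j) = x.2.2.1 j := by
  simp [DG_apply, eR1, dotp_zero_right, dotp_single]

lemma DG_eRn (U1 U2 : Vec d → ℝ) (x : Phase d n) (j : Fin d) :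
    DG d n U1 U2 x (eRn d n j) = x.2.2.2 j := by
  simp [DG_apply, eRn, dotp_zero_right, dotp_single]

lemma DG_eQ (U1 U2 : Vec d → ℝ) (x : Phase d n) (i : ℕ) (j : Fin d) :
    DG d n U1 U2 x (eQ d n i j) = fderiv ℝ (Vpot d n U1 U2) x.2.1 (basisQ d n i j) := by
  simp [DG_apply, eQ, dotp_zero_right]

lemma DG_eP (U1 U2 : Vec d → ℝ) (x : Phase d n) (i : ℕ) (j : Fin d) :
    DG d n U1 U2 x (eP d n i j) = nth x.1 i j := by
  rw [DG_apply]
  simp only [eP]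
  by_cases h : 1 ≤ i ∧ i ≤ n
  · rw [nth, dif_pos h]
    rw [basisQ, dif_pos h]
    rw [Finset.sum_eq_single (⟨i - 1, by omega⟩ : Fin n)]
    · simp [dotp_zero_right, dotp_single]
    · intro b _ hb
      rw [Pi.single_eq_of_ne hb, dotp_zero_right]
    · simp
  · rw [nth, dif_neg h, basisQ, dif_neg h]
    simp [dotp_zero_right]

end Helpers

set_option maxHeartbeats 1000000 in
/-- if `-α < θT₁ < 1-α` and `-α < θTₙ < 1-α`, then
`L̄_α e^{θG} ≤ C e^{θG}` with `C = γd(θ(T₁+Tₙ) + 2α)`. -/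
theorem genBar_exp_energy_bound
    (d n : ℕ) (hd : 1 ≤ d) (hn : 2 ≤ n)
    (U1 U2 : Vec d → ℝ) (hU1 : ContDiff ℝ (⊤ : ℕ∞) U1) (hU2 : ContDiff ℝ (⊤ : ℕ∞) U2)
    (ga lam T1 Tn : ℝ) (hga : 0 < ga) (hT1 : 0 < T1) (hTn : 0 < Tn)
    (al th : ℝ)
    (h1 : -al < th * T1) (h2 : th * T1 < 1 - al)
    (h3 : -al < th * Tn) (h4 : th * Tn < 1 - al) :
    ∃ C : ℝ, C = ga * (d : ℝ) * (th * (T1 + Tn) + 2 * al) ∧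
      ∀ x : Phase d n,
        genBar d n U1 U2 ga lam T1 Tn al (fun y => Real.exp (th * Gfun d n U1 U2 y)) x
          ≤ C * Real.exp (th * Gfun d n U1 U2 x) := by
  refine ⟨ga * (d : ℝ) * (th * (T1 + Tn) + 2 * al), rfl, ?_⟩
  intro x
  have hT1' : T1 ≠ 0 := ne_of_gt hT1
  have hTn' : Tn ≠ 0 := ne_of_gt hTn
  set f : Phase d n → ℝ := fun y => Real.exp (th * Gfun d n U1 U2 y) with hfdef
  set E : ℝ := Real.exp (th * Gfun d n U1 U2 x) with hEdef
  have hEpos : 0 < E := by rw [hEdef]; exact Real.exp_pos _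
  set S1 : ℝ := dotp x.2.2.1 x.2.2.1 with hS1def
  set Sn : ℝ := dotp x.2.2.2 x.2.2.2 with hSndef
  have hS1 : 0 ≤ S1 := by rw [hS1def]; exact dotp_self_nonneg _
  have hSn : 0 ≤ Sn := by rw [hSndef]; exact dotp_self_nonneg _
  have hf : ∀ y : Phase d n, HasFDerivAt f
      (Real.exp (th * Gfun d n U1 U2 y) • (th • DG d n U1 U2 y)) y := by
    intro y
    rw [hfdef]
    exact ((hasFDerivAt_G U1 U2 hU1 hU2 y).const_mul th).exp
  have hfx : f x = E := by rw [hfdef, hEdef]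
  have hpd : ∀ v : Phase d n, pd f v x = E * (th * DG d n U1 U2 x v) := by
    intro v
    rw [pd, (hf x).fderiv, hEdef]
    simp only [ContinuousLinearMap.smul_apply, smul_eq_mul]
  -- second derivatives in r₁ directions
  have hpd2r1 : ∀ j : Fin d, pd2 f (eR1 d n j) x
      = E * (th + th ^ 2 * (x.2.2.1 j * x.2.2.1 j)) := by
    intro j
    have heq : (fun y => fderiv ℝ f y (eR1 d n j))
        = fun y => f y * (th * y.2.2.1 j) := by
      funext y
      rw [(hf y).fderiv, hfdef]
      simp only [ContinuousLinearMap.smul_apply, smul_eq_mul, DG_eR1]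
    have hcoord : HasFDerivAt (fun y : Phase d n => th * y.2.2.1 j)
        (th • ((ContinuousLinearMap.proj j : Vec d →L[ℝ] ℝ).comp projR1)) x :=
      (((ContinuousLinearMap.proj j : Vec d →L[ℝ] ℝ).comp projR1).hasFDerivAt).const_mul th
    have hprod := (hf x).fun_mul hcoord
    rw [pd2, heq, hprod.fderiv, hfdef, hEdef]
    simp only [ContinuousLinearMap.add_apply, ContinuousLinearMap.smul_apply,
      ContinuousLinearMap.comp_apply, ContinuousLinearMap.proj_apply, smul_eq_mul,
      DG_eR1, projR1_apply, eR1_proj, Pi.single_eq_same]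
    ring
  have hpd2rn : ∀ j : Fin d, pd2 f (eRn d n j) x
      = E * (th + th ^ 2 * (x.2.2.2 j * x.2.2.2 j)) := by
    intro j
    have heq : (fun y => fderiv ℝ f y (eRn d n j))
        = fun y => f y * (th * y.2.2.2 j) := by
      funext y
      rw [(hf y).fderiv, hfdef]
      simp only [ContinuousLinearMap.smul_apply, smul_eq_mul, DG_eRn]
    have hcoord : HasFDerivAt (fun y : Phase d n => th * y.2.2.2 j)
        (th • ((ContinuousLinearMap.proj j : Vec d →L[ℝ] ℝ).comp projRn)) x :=
      (((ContinuousLinearMap.proj j : Vec d →L[ℝ] ℝ).comp projRn).hasFDerivAt).const_mul th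
    have hprod := (hf x).fun_mul hcoord
    rw [pd2, heq, hprod.fderiv, hfdef, hEdef]
    simp only [ContinuousLinearMap.add_apply, ContinuousLinearMap.smul_apply,
      ContinuousLinearMap.comp_apply, ContinuousLinearMap.proj_apply, smul_eq_mul,
      DG_eRn, projRn_apply, eRn_proj, Pi.single_eq_same]
    ring
  -- sums of second derivatives
  have hA1 : (∑ j, pd2 f (eR1 d n j) x) = E * ((d : ℝ) * th + th ^ 2 * S1) := by
    rw [Finset.sum_congr rfl fun j (_ : j ∈ Finset.univ) =>
      (hpd2r1 j).trans (by ring :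
        E * (th + th ^ 2 * (x.2.2.1 j * x.2.2.1 j))
          = E * th + E * th ^ 2 * (x.2.2.1 j * x.2.2.1 j))]
    rw [Finset.sum_add_distrib, Finset.sum_const, ← Finset.mul_sum, Finset.card_univ,
      Fintype.card_fin, nsmul_eq_mul]
    rw [hS1def, dotp]
    ring
  have hAn : (∑ j, pd2 f (eRn d n j) x) = E * ((d : ℝ) * th + th ^ 2 * Sn) := by
    rw [Finset.sum_congr rfl fun j (_ : j ∈ Finset.univ) =>
      (hpd2rn j).trans (by ring :
        E * (th + th ^ 2 * (x.2.2.2 j * x.2.2.2 j))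
          = E * th + E * th ^ 2 * (x.2.2.2 j * x.2.2.2 j))]
    rw [Finset.sum_add_distrib, Finset.sum_const, ← Finset.mul_sum, Finset.card_univ,
      Fintype.card_fin, nsmul_eq_mul]
    rw [hSndef, dotp]
    ring
  -- first-order sums in r directions
  have hB1 : (∑ j, x.2.2.1 j * pd f (eR1 d n j) x) = E * (th * S1) := by
    rw [Finset.sum_congr rfl fun j (_ : j ∈ Finset.univ) => by
      rw [hpd, DG_eR1]]
    simp only [hS1def, dotp, Finset.mul_sum]
    exact Finset.sum_congr rfl fun j _ => by ring
  have hBn : (∑ j, x.2.2.2 j * pd f (eRn d n j) x) = E * (th * Sn) := by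
    rw [Finset.sum_congr rfl fun j (_ : j ∈ Finset.univ) => by
      rw [hpd, DG_eRn]]
    simp only [hSndef, dotp, Finset.mul_sum]
    exact Finset.sum_congr rfl fun j _ => by ring
  -- cancellation of the λ terms
  have hc1 : (∑ j, nth x.1 1 j * pd f (eR1 d n j) x)
      = ∑ j, x.2.2.1 j * pd f (eP d n 1 j) x :=
    Finset.sum_congr rfl fun j _ => by rw [hpd, hpd, DG_eR1, DG_eP]; ring
  have hcn : (∑ j, nth x.1 n j * pd f (eRn d n j) x)
      = ∑ j, x.2.2.2 j * pd f (eP d n n j) x :=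
    Finset.sum_congr rfl fun j _ => by rw [hpd, hpd, DG_eRn, DG_eP]; ring
  -- cancellation of the Hamiltonian terms
  have hH : (∑ i ∈ Finset.Icc 1 n, ∑ j, nth x.1 i j * pd f (eQ d n i j) x)
      = ∑ i ∈ Finset.Icc 1 n, ∑ j,
          fderiv ℝ (Vpot d n U1 U2) x.2.1 (basisQ d n i j) * pd f (eP d n i j) x :=
    Finset.sum_congr rfl fun i _ => Finset.sum_congr rfl fun j _ => by
      rw [hpd, hpd, DG_eQ, DG_eP]; ring
  -- exact value of L̄_α f at x
  have hval : genBar d n U1 U2 ga lam T1 Tn al f x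
      = ga * (d : ℝ) * (th * (T1 + Tn) + 2 * al) * E
        + (ga * (S1 / T1) * ((th * T1 + al) ^ 2 - (th * T1 + al))) * E
        + (ga * (Sn / Tn) * ((th * Tn + al) ^ 2 - (th * Tn + al))) * E := by
    rw [genBar, genTilde, gen, gen0, gen1, hA1, hAn, hB1, hBn, hc1, hcn, hH, hfx]
    field_simp
    ring
  rw [hval]
  have hq1 : (th * T1 + al) ^ 2 - (th * T1 + al) ≤ 0 := by
    have e : (th * T1 + al) ^ 2 - (th * T1 + al) = (th * T1 + al) * ((th * T1 + al) - 1) := by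
      ring
    rw [e]
    exact mul_nonpos_of_nonneg_of_nonpos (by linarith) (by linarith)
  have hqn : (th * Tn + al) ^ 2 - (th * Tn + al) ≤ 0 := by
    have e : (th * Tn + al) ^ 2 - (th * Tn + al) = (th * Tn + al) * ((th * Tn + al) - 1) := by
      ring
    rw [e]
    exact mul_nonpos_of_nonneg_of_nonpos (by linarith) (by linarith)
  have ht1 : (ga * (S1 / T1) * ((th * T1 + al) ^ 2 - (th * T1 + al))) * E ≤ 0 :=
    mul_nonpos_of_nonpos_of_nonneg
      (mul_nonpos_of_nonneg_of_nonpos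
        (mul_nonneg hga.le (div_nonneg hS1 hT1.le)) hq1) hEpos.le
  have htn : (ga * (Sn / Tn) * ((th * Tn + al) ^ 2 - (th * Tn + al))) * E ≤ 0 :=
    mul_nonpos_of_nonpos_of_nonneg
      (mul_nonpos_of_nonneg_of_nonpos
        (mul_nonneg hga.le (div_nonneg hSn hTn.le)) hqn) hEpos.le
  linarith

end EP
end
end

section
/- Gallavotti–Cohen symmetry of the Legendre transform: let e : ℝ → ℝ satisfy e(α) = e(1−α) for all α ∈ ℝ, and suppose that for every w ∈ ℝ the set {e(α) − αw : α ∈ ℝ} is bounded above; define the large deviation functional I(w) = sup_{α ∈ ℝ} (e(α) − αw). Then I(w) − I(−w) = −w for every w ∈ ℝ; that is, the odd part of I is linear with slope −1/2. -/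
open scoped BigOperators
open MeasureTheory

noncomputable section

namespace EP

def legendre (e : ℝ → ℝ) (w : ℝ) : ℝ := ⨆ α : ℝ, e α - α * w

/-- The substitution `α ↦ 1 - α`; applied at both `w` and `-w` it gives the two halves of
`I(w) - I(-w) = -w`. -/
theorem legendre_le_legendre_neg_sub {e : ℝ → ℝ} (hsym : ∀ α, e α = e (1 - α)) {w : ℝ}
    (hbdd : BddAbove (Set.range fun α : ℝ => e α - α * (-w))) :
    legendre e w ≤ legendre e (-w) - w :=
  ciSup_le fun α => calc
    e α - α * w = e (1 - α) - (1 - α) * (-w) - w := by rw [← hsym α]; ring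
    _ ≤ legendre e (-w) - w := sub_le_sub_right (le_ciSup hbdd (1 - α)) w

/-- Gallavotti–Cohen symmetry of the Legendre transform:
if `e(α) = e(1-α)` and `I(w) = sup_α (e(α) - αw)` is well defined, then
`I(w) - I(-w) = -w`, i.e. the odd part of `I` is linear with slope `-1/2`. -/
theorem legendre_transform_symmetry
    (e : ℝ → ℝ) (hsym : ∀ al : ℝ, e al = e (1 - al))
    (hbdd : ∀ w : ℝ, BddAbove (Set.range fun al : ℝ => e al - al * w)) :
    ∀ w : ℝ, (⨆ al : ℝ, e al - al * w) - (⨆ al : ℝ, e al - al * (-w)) = -w := by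
  intro w
  have upper := legendre_le_legendre_neg_sub hsym (hbdd (-w))
  have lower :=
    legendre_le_legendre_neg_sub hsym (w := -w) (by simpa only [neg_neg] using hbdd w)
  rw [neg_neg] at lower
  change legendre e w - legendre e (-w) = -w
  linarith
end EP
end
end
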